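/- Let ρ > 0 and let μ be a nonzero positive Radon measure on [0,∞) with ∫_{[0,∞)} (1+r)^{−1} μ(dr) < ∞, with μ({0}) > 0 and G₀ := μ([0,∞)) < ∞. Define Q(p) = p ∫_{[0,∞)} (p+r)^{−1} μ(dr), κ(p) = ρ^{1/2} p / Q(p)^{1/2} (principal square root), and β(p) = κ(p) − (ρ/G₀)^{1/2} p for complex p with Re p ≥ 0, p ≠ 0. Then for every fixed r > 0, the function f(p) = e^{−β(p) r} / (Q(p) κ(p)) is holomorphic in the open right half-plane and tends to 0 as |p| → ∞, uniformly with respect to arg p ∈ [−π/2, π/2]. -/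

import Mathlib

/-!
Write `ν` for `μ` restricted to `[0,∞)`, `G₀ = ν[0,∞)` and `E(p) = ∫ r/(p+r) dν`, so that
`Q = G₀ - E`. For `Re p ≥ 0` each `p/(p+r)`, hence `Q(p)`, `√Q(p)` and `p E(p)`, lies in the
closed quadrant of the right half-plane containing `p`. Since
`p/√Q - p/√G₀ = p E / (√G₀ (√G₀ √Q + Q))`, a quotient of two points of that quadrant, `Re β ≥ 0`
and `|e^{-β r}| ≤ 1`. Dominated convergence gives `E(p) → 0` uniformly, so `|Q| ≥ G₀/2` for
large `|p|` and `|Q κ| = √ρ |p| |Q|^{1/2}` grows linearly. Holomorphy comes from differentiating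
under the integral sign, `Re Q > 0` keeping `√Q` on the principal branch.
-/

open MeasureTheory Set Filter Topology

namespace Complex

theorem norm_le_norm_add_ofReal {p : ℂ} {x : ℝ} (hp : 0 ≤ p.re) (hx : 0 ≤ x) :
    ‖p‖ ≤ ‖p + x‖ := by
  rw [norm_def, norm_def]
  apply Real.sqrt_le_sqrt
  simp only [normSq_apply, add_re, add_im, ofReal_re, ofReal_im, add_zero]
  nlinarith

theorem re_add_le_norm_add_ofReal (p : ℂ) (x : ℝ) : p.re + x ≤ ‖p + x‖ := by
  simpa using re_le_norm (p + x)

theorem cpow_one_half_sq (z : ℂ) : (z ^ ((1:ℂ) / 2)) ^ 2 = z := by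
  rw [one_div]; exact cpow_ofNat_inv_pow z 2

theorem cpow_one_half_ne_zero {z : ℂ} (hz : z ≠ 0) : z ^ ((1:ℂ) / 2) ≠ 0 :=
  fun h => hz ((cpow_eq_zero_iff _ _).1 h).1

theorem mul_div_cpow_one_half (z w : ℂ) :
    z * (w / z ^ ((1:ℂ) / 2)) = w * z ^ ((1:ℂ) / 2) := by
  rcases eq_or_ne z 0 with rfl | hz
  · simp
  have hS := cpow_one_half_ne_zero hz
  nth_rw 1 [← cpow_one_half_sq z]
  field_simp

theorem norm_exp_neg_mul_div_le_inv_norm {β D : ℂ} {r : ℝ} (hβ : 0 ≤ β.re) (hr : 0 ≤ r) :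
    ‖exp (-β * r) / D‖ ≤ ‖D‖⁻¹ := by
  rw [norm_div, norm_exp, div_eq_mul_inv]
  refine mul_le_of_le_one_left (inv_nonneg.2 (norm_nonneg D)) (Real.exp_le_one_iff.2 ?_)
  simpa [mul_re] using mul_nonneg hβ hr

end Complex

def quadrant (ε : ℝ) : Set ℂ := {z | 0 ≤ z.re ∧ 0 ≤ ε * z.im}

namespace quadrant

variable {ε : ℝ} {z w : ℂ}

theorem zero_mem : (0 : ℂ) ∈ quadrant ε := by simp [quadrant]

theorem add_mem (hz : z ∈ quadrant ε) (hw : w ∈ quadrant ε) : z + w ∈ quadrant ε :=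
  ⟨by simpa using add_nonneg hz.1 hw.1, by simpa [mul_add] using add_nonneg hz.2 hw.2⟩

theorem ofReal_mul_mem {a : ℝ} (ha : 0 ≤ a) (hz : z ∈ quadrant ε) : (a : ℂ) * z ∈ quadrant ε :=
  ⟨by simpa using mul_nonneg ha hz.1, by simpa [mul_left_comm ε] using mul_nonneg ha hz.2⟩

theorem exists_mem_of_re_nonneg (hz : 0 ≤ z.re) : ∃ ε ≠ 0, z ∈ quadrant ε := by
  rcases le_total 0 z.im with h | h
  · exact ⟨1, one_ne_zero, hz, by simpa using h⟩
  · exact ⟨-1, by norm_num, hz, by simpa using h⟩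

theorem div_add_ofReal_mem {x : ℝ} (hz : z ∈ quadrant ε) (hx : 0 ≤ x) :
    z / (z + x) ∈ quadrant ε := by
  have hN := Complex.normSq_nonneg (z + x)
  refine ⟨?_, ?_⟩
  · rw [Complex.div_re]
    simp only [Complex.add_re, Complex.add_im, Complex.ofReal_re, Complex.ofReal_im, add_zero]
    exact add_nonneg (div_nonneg (mul_nonneg hz.1 (by linarith [hz.1])) hN)
      (div_nonneg (mul_self_nonneg _) hN)
  · rw [Complex.div_im]
    simp only [Complex.add_re, Complex.add_im, Complex.ofReal_re, Complex.ofReal_im, add_zero]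
    rw [← sub_div, mul_div_assoc']
    apply div_nonneg _ hN
    nlinarith [hz.2]

theorem cpow_one_half_mem (hz : z ∈ quadrant ε) : z ^ ((1:ℂ) / 2) ∈ quadrant ε := by
  rw [one_div]
  rcases eq_or_ne z 0 with rfl | hz0
  · simp [quadrant]
  set w := z ^ (2⁻¹ : ℂ)
  have hw : 0 < w.re := by
    rw [Complex.cpow_inv_two_re]
    apply Real.sqrt_pos.2
    linarith [norm_pos_iff.2 hz0, hz.1]
  have hzw : z.im = 2 * w.re * w.im := by
    rw [← Complex.cpow_ofNat_inv_pow z 2]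
    simp only [sq, Complex.mul_im]
    ring
  refine ⟨hw.le, ?_⟩
  have := hz.2
  rw [hzw] at this
  nlinarith

theorem re_div_nonneg (hε : ε ≠ 0) (hz : z ∈ quadrant ε) (hw : w ∈ quadrant ε) :
    0 ≤ (z / w).re := by
  have him : 0 ≤ z.im * w.im := by
    have := mul_nonneg hz.2 hw.2
    have hε2 : 0 < ε * ε := mul_self_pos.2 hε
    nlinarith
  rw [Complex.div_re, ← add_div]
  exact div_nonneg (add_nonneg (mul_nonneg hz.1 hw.1) him) (Complex.normSq_nonneg w)

theorem integral_mem {α : Type*} [MeasurableSpace α] {ν : Measure α} {f : α → ℂ}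
    (hf : ∀ᵐ a ∂ν, f a ∈ quadrant ε) : ∫ a, f a ∂ν ∈ quadrant ε := by
  by_cases hfi : Integrable f ν
  · refine ⟨?_, ?_⟩
    · have := integral_re hfi
      simp only [RCLike.re_to_complex] at this
      rw [← this]
      exact integral_nonneg_of_ae (hf.mono fun a ha => ha.1)
    · have him := integral_im hfi
      simp only [RCLike.im_to_complex] at him
      rw [← him, ← integral_const_mul]
      exact integral_nonneg_of_ae (hf.mono fun a ha => ha.2)
  · -- a non-integrable `f` has integral `0`
    rw [integral_undef hfi]
    exact zero_mem

end quadrant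

-- `ν` plays the role of the relaxation spectrum `μ` restricted to `[0,∞)`.
noncomputable def complexModulus (ν : Measure ℝ) (p : ℂ) : ℂ := p * ∫ x, (p + x)⁻¹ ∂ν

noncomputable def waveNumber (ν : Measure ℝ) (ρ : ℝ) (p : ℂ) : ℂ :=
  (Real.sqrt ρ : ℂ) * p / complexModulus ν p ^ ((1:ℂ) / 2)

section

variable {ν : Measure ℝ} {p : ℂ}

theorem complexModulus_eq_integral (ν : Measure ℝ) (p : ℂ) :
    complexModulus ν p = ∫ x, p / (p + x) ∂ν := by
  simp only [complexModulus, div_eq_mul_inv, integral_const_mul]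

theorem integrable_div_add_ofReal [IsFiniteMeasure ν] (hν : ∀ᵐ x : ℝ ∂ν, 0 ≤ x) (hp : 0 ≤ p.re) :
    Integrable (fun x : ℝ => p / (p + x)) ν := by
  refine Integrable.of_bound (by fun_prop : Measurable _).aestronglyMeasurable 1
    (hν.mono fun x hx => ?_)
  rw [norm_div]
  exact div_le_one_of_le₀ (Complex.norm_le_norm_add_ofReal hp hx) (norm_nonneg _)

theorem integrable_ofReal_div_add [IsFiniteMeasure ν] (hν : ∀ᵐ x : ℝ ∂ν, 0 ≤ x) (hp : 0 ≤ p.re) :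
    Integrable (fun x : ℝ => (x : ℂ) / (p + x)) ν := by
  refine Integrable.of_bound (by fun_prop : Measurable _).aestronglyMeasurable 1
    (hν.mono fun x hx => ?_)
  rw [norm_div, Complex.norm_real, Real.norm_of_nonneg hx]
  exact div_le_one_of_le₀ (by linarith [Complex.re_add_le_norm_add_ofReal p x]) (norm_nonneg _)

theorem complexModulus_eq_sub [IsFiniteMeasure ν] (hν : ∀ᵐ x : ℝ ∂ν, 0 ≤ x) (hp : 0 ≤ p.re)
    (hp0 : p ≠ 0) :
    complexModulus ν p = ν.real univ - ∫ x, (x : ℂ) / (p + x) ∂ν := by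
  have hsplit : ∀ᵐ x : ℝ ∂ν, p / (p + x) = 1 - (x : ℂ) / (p + x) := hν.mono fun x hx => by
    have : p + x ≠ 0 := norm_pos_iff.1 <|
      (norm_pos_iff.2 hp0).trans_le (Complex.norm_le_norm_add_ofReal hp hx)
    field_simp
    ring
  rw [complexModulus_eq_integral, integral_congr_ae hsplit,
    integral_sub (integrable_const 1) (integrable_ofReal_div_add hν hp)]
  simp

theorem complexModulus_mem_quadrant (hν : ∀ᵐ x : ℝ ∂ν, 0 ≤ x) {ε : ℝ} (hp : p ∈ quadrant ε) :
    complexModulus ν p ∈ quadrant ε := by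
  rw [complexModulus_eq_integral]
  exact quadrant.integral_mem (hν.mono fun x hx => quadrant.div_add_ofReal_mem hp hx)

theorem mul_integral_ofReal_div_add_mem_quadrant (hν : ∀ᵐ x : ℝ ∂ν, 0 ≤ x) {ε : ℝ}
    (hp : p ∈ quadrant ε) : p * ∫ x, (x : ℂ) / (p + x) ∂ν ∈ quadrant ε := by
  rw [← integral_const_mul]
  refine quadrant.integral_mem (hν.mono fun x hx => ?_)
  rw [mul_div_left_comm]
  exact quadrant.ofReal_mul_mem hx (quadrant.div_add_ofReal_mem hp hx)

theorem re_complexModulus_pos [IsFiniteMeasure ν] [NeZero ν] (hν : ∀ᵐ x : ℝ ∂ν, 0 ≤ x)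
    (hp : 0 ≤ p.re) (hp0 : p ≠ 0) : 0 < (complexModulus ν p).re := by
  have hpos : ∀ᵐ x : ℝ ∂ν, 0 < (p / (p + x)).re := hν.mono fun x hx => by
    have hN : 0 < Complex.normSq (p + x) := Complex.normSq_pos.2 <| norm_pos_iff.1 <|
      (norm_pos_iff.2 hp0).trans_le (Complex.norm_le_norm_add_ofReal hp hx)
    rw [Complex.div_re, ← add_div]
    simp only [Complex.add_re, Complex.add_im, Complex.ofReal_re, Complex.ofReal_im, add_zero]
    have := Complex.normSq_pos.2 hp0
    rw [Complex.normSq_apply] at this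
    exact div_pos (by nlinarith) hN
  have hint := integrable_div_add_ofReal hν hp
  have hre := integral_re hint
  simp only [RCLike.re_to_complex] at hre
  rw [complexModulus_eq_integral, ← hre, integral_pos_iff_support_of_nonneg_ae
    (hpos.mono fun x hx => hx.le) hint.re]
  refine (Measure.measure_univ_pos.2 (NeZero.ne ν)).trans_le (measure_mono_ae ?_)
  exact hpos.mono fun x hx _ => hx.ne'

theorem complexModulus_ne_zero [IsFiniteMeasure ν] [NeZero ν] (hν : ∀ᵐ x : ℝ ∂ν, 0 ≤ x)
    (hp : 0 ≤ p.re) (hp0 : p ≠ 0) : complexModulus ν p ≠ 0 :=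
  fun h => by simpa [h] using re_complexModulus_pos hν hp hp0

theorem re_div_cpow_one_half_complexModulus_sub_nonneg [IsFiniteMeasure ν] [NeZero ν]
    (hν : ∀ᵐ x : ℝ ∂ν, 0 ≤ x) (hp : 0 ≤ p.re) :
    0 ≤ (p / complexModulus ν p ^ ((1:ℂ) / 2) - p / Real.sqrt (ν.real univ)).re := by
  rcases eq_or_ne p 0 with rfl | hp0
  · simp
  obtain ⟨ε, hε, hpε⟩ := quadrant.exists_mem_of_re_nonneg hp
  have hQε := complexModulus_mem_quadrant hν hpε
  set S := complexModulus ν p ^ ((1:ℂ) / 2)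
  set g := Real.sqrt (ν.real univ)
  have hg : 0 < g := Real.sqrt_pos.2 measureReal_univ_pos
  have hg0 : (g : ℂ) ≠ 0 := Complex.ofReal_ne_zero.2 hg.ne'
  have hS2 : S ^ 2 = complexModulus ν p := Complex.cpow_one_half_sq _
  have hE : ∫ x, (x : ℂ) / (p + x) ∂ν = (g : ℂ) ^ 2 - S ^ 2 := by
    rw [hS2, complexModulus_eq_sub hν hp hp0, ← Complex.ofReal_pow, Real.sq_sqrt measureReal_nonneg]
    ring
  have hS0 : S ≠ 0 := Complex.cpow_one_half_ne_zero (complexModulus_ne_zero hν hp hp0)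
  have hSε : S ∈ quadrant ε := quadrant.cpow_one_half_mem hQε
  have hgS : (g : ℂ) + S ≠ 0 := fun h => by
    have := congrArg Complex.re h
    simp only [Complex.add_re, Complex.ofReal_re, Complex.zero_re] at this
    linarith [hSε.1]
  have hquotient : p / S - p / g =
      p * (∫ x, (x : ℂ) / (p + x) ∂ν) / ((g : ℂ) * ((g : ℂ) * S + S ^ 2)) := by
    rw [hE]
    field_simp
    ring
  rw [hquotient]
  refine quadrant.re_div_nonneg hε (mul_integral_ofReal_div_add_mem_quadrant hν hpε) ?_
  exact quadrant.ofReal_mul_mem hg.le <| quadrant.add_mem (quadrant.ofReal_mul_mem hg.le hSε)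
    (hS2 ▸ hQε)

theorem re_waveNumber_sub_nonneg [IsFiniteMeasure ν] [NeZero ν] (hν : ∀ᵐ x : ℝ ∂ν, 0 ≤ x)
    (ρ : ℝ) (hp : 0 ≤ p.re) :
    0 ≤ (waveNumber ν ρ p - (Real.sqrt (ρ / ν.real univ) : ℂ) * p).re := by
  have h : waveNumber ν ρ p - (Real.sqrt (ρ / ν.real univ) : ℂ) * p = (Real.sqrt ρ : ℂ) *
      (p / complexModulus ν p ^ ((1:ℂ) / 2) - p / Real.sqrt (ν.real univ)) := by
    rw [waveNumber, Real.sqrt_div' ρ measureReal_nonneg]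
    push_cast
    ring
  rw [h, Complex.re_ofReal_mul]
  exact mul_nonneg (Real.sqrt_nonneg ρ) (re_div_cpow_one_half_complexModulus_sub_nonneg hν hp)

theorem exists_norm_complexModulus_sub_le [IsFiniteMeasure ν] (hν : ∀ᵐ x : ℝ ∂ν, 0 ≤ x)
    {η : ℝ} (hη : 0 < η) :
    ∃ R > 0, ∀ p : ℂ, 0 ≤ p.re → R ≤ ‖p‖ → ‖complexModulus ν p - ν.real univ‖ ≤ η := by
  have hmeas : ∀ R : ℝ, AEStronglyMeasurable (fun x : ℝ => min 1 (x / R)) ν := fun R =>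
    (by fun_prop : Measurable _).aestronglyMeasurable
  have hlim : Tendsto (fun R : ℝ => ∫ x, min 1 (x / R) ∂ν) atTop (𝓝 0) := by
    have := tendsto_integral_filter_of_dominated_convergence (f := fun _ => 0) (fun _ => (1:ℝ))
      (Eventually.of_forall hmeas)
      ((eventually_gt_atTop 0).mono fun R hR => hν.mono fun x hx => by
        rw [Real.norm_of_nonneg (le_min zero_le_one (div_nonneg hx hR.le))]
        exact min_le_left _ _)
      (integrable_const 1)
      (Eventually.of_forall fun x => by
        simpa using (tendsto_const_nhds (x := (1:ℝ))).min
          ((tendsto_const_nhds (x := x)).div_atTop tendsto_id))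
    simpa using this
  obtain ⟨R, hRη, hR⟩ := ((hlim.eventually (ge_mem_nhds hη)).and (eventually_gt_atTop 0)).exists
  refine ⟨R, hR, fun p hp hpR => ?_⟩
  have hp0 : p ≠ 0 := norm_pos_iff.1 (hR.trans_le hpR)
  rw [complexModulus_eq_sub hν hp hp0, sub_sub_cancel_left, norm_neg]
  refine (norm_integral_le_of_norm_le (Integrable.of_bound (hmeas R) 1 ?_)
    (hν.mono fun x hx => ?_)).trans hRη
  · refine hν.mono fun x hx => ?_
    rw [Real.norm_of_nonneg (le_min zero_le_one (div_nonneg hx hR.le))]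
    exact min_le_left _ _
  · rw [norm_div, Complex.norm_real, Real.norm_of_nonneg hx]
    exact le_min
      (div_le_one_of_le₀ (by linarith [Complex.re_add_le_norm_add_ofReal p x]) (norm_nonneg _))
      (div_le_div_of_nonneg_left hx hR (hpR.trans (Complex.norm_le_norm_add_ofReal hp hx)))

theorem differentiableOn_complexModulus [IsFiniteMeasure ν] (hν : ∀ᵐ x : ℝ ∂ν, 0 ≤ x) :
    DifferentiableOn ℂ (complexModulus ν) {p | 0 < p.re} := by
  intro p₀ hp₀
  set d := p₀.re / 2
  have hd : 0 < d := half_pos hp₀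
  have hp₀d : p₀ ∈ {p : ℂ | d < p.re} := half_lt_self (α := ℝ) hp₀
  have hs : {p : ℂ | d < p.re} ∈ 𝓝 p₀ :=
    (isOpen_lt continuous_const Complex.continuous_re).mem_nhds hp₀d
  have hdist : ∀ p ∈ {p : ℂ | d < p.re}, ∀ x : ℝ, 0 ≤ x → d ≤ ‖p + x‖ := fun p hp x hx => by
    linarith [Complex.re_add_le_norm_add_ofReal p x, hp.out]
  have hderiv := hasDerivAt_integral_of_dominated_loc_of_deriv_le (μ := ν) (x₀ := p₀)
    (F := fun (p : ℂ) (x : ℝ) => (p + x)⁻¹) (F' := fun (p : ℂ) (x : ℝ) => -((p + x) ^ 2)⁻¹)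
    (bound := fun _ => (d ^ 2)⁻¹) hs
    (Eventually.of_forall fun p => (by fun_prop : Measurable _).aestronglyMeasurable)
    (Integrable.of_bound (by fun_prop : Measurable _).aestronglyMeasurable d⁻¹
      (hν.mono fun x hx => ?_))
    (by fun_prop : Measurable _).aestronglyMeasurable
    (hν.mono fun x hx p hp => ?_) (integrable_const _) (hν.mono fun x hx p hp => ?_)
  · exact (differentiableAt_id.mul hderiv.2.differentiableAt).differentiableWithinAt
  · rw [norm_inv]
    exact inv_anti₀ hd (hdist p₀ hp₀d x hx)
  · rw [norm_neg, norm_inv, norm_pow]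
    exact inv_anti₀ (by positivity) (pow_le_pow_left₀ hd.le (hdist p hp x hx) 2)
  · have hne : p + x ≠ 0 := norm_pos_iff.1 (hd.trans_le (hdist p hp x hx))
    simpa [neg_div, Pi.inv_def] using ((hasDerivAt_id p).add_const (x : ℂ)).inv hne

theorem complexModulus_mul_waveNumber (ν : Measure ℝ) (ρ : ℝ) (p : ℂ) :
    complexModulus ν p * waveNumber ν ρ p =
      (Real.sqrt ρ : ℂ) * p * complexModulus ν p ^ ((1:ℂ) / 2) := by
  rw [waveNumber, Complex.mul_div_cpow_one_half]

theorem differentiableOn_waveNumber [IsFiniteMeasure ν] [NeZero ν] (hν : ∀ᵐ x : ℝ ∂ν, 0 ≤ x)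
    (ρ : ℝ) : DifferentiableOn ℂ (waveNumber ν ρ) {p | 0 < p.re} := by
  intro p hp
  have hp0 : p ≠ 0 := fun h => by simp [h] at hp
  exact ((differentiableWithinAt_const _).mul differentiableWithinAt_id).div
    ((differentiableOn_complexModulus hν p hp).cpow (differentiableWithinAt_const _)
      (Or.inl (re_complexModulus_pos hν hp.out.le hp0)))
    (Complex.cpow_one_half_ne_zero (complexModulus_ne_zero hν hp.out.le hp0))

theorem exists_mul_norm_le_norm_complexModulus_mul_waveNumber [IsFiniteMeasure ν] [NeZero ν]
    (hν : ∀ᵐ x : ℝ ∂ν, 0 ≤ x) {ρ : ℝ} (hρ : 0 < ρ) :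
    ∃ C > 0, ∃ R > 0, ∀ p : ℂ, 0 ≤ p.re → R ≤ ‖p‖ →
      C * ‖p‖ ≤ ‖complexModulus ν p * waveNumber ν ρ p‖ := by
  have hG : 0 < ν.real univ := measureReal_univ_pos
  obtain ⟨R, hR, hQ⟩ := exists_norm_complexModulus_sub_le hν (half_pos hG)
  refine ⟨Real.sqrt ρ * Real.sqrt (ν.real univ / 2), by positivity, R, hR, fun p hp hpR => ?_⟩
  have hQp : ν.real univ / 2 ≤ ‖complexModulus ν p‖ := by
    have := norm_sub_norm_le (ν.real univ : ℂ) (complexModulus ν p)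
    rw [norm_sub_rev, Complex.norm_real, Real.norm_of_nonneg hG.le] at this
    linarith [hQ p hp hpR]
  have hS : Real.sqrt (ν.real univ / 2) ≤ ‖complexModulus ν p ^ ((1:ℂ) / 2)‖ :=
    Real.sqrt_le_iff.2 ⟨norm_nonneg _, by rw [← norm_pow, Complex.cpow_one_half_sq]; exact hQp⟩
  rw [complexModulus_mul_waveNumber, norm_mul, norm_mul, Complex.norm_real,
    Real.norm_of_nonneg (Real.sqrt_nonneg ρ), mul_right_comm]
  gcongr

end

theorem stmt12_general (ρ : ℝ) (hρ : 0 < ρ) (μ : Measure ℝ)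
    (h0 : μ {(0:ℝ)} ≠ 0) (hfin : μ (Ici (0:ℝ)) ≠ ⊤)
    (Q κ β : ℂ → ℂ)
    (hQ : ∀ p : ℂ, Q p = p * ∫ r in Ici (0:ℝ), (p + (r : ℂ))⁻¹ ∂μ)
    (hκ : ∀ p : ℂ, κ p = (Real.sqrt ρ : ℂ) * p / (Q p) ^ ((1:ℂ) / 2))
    (hβ : ∀ p : ℂ, β p = κ p - ((Real.sqrt (ρ / (μ (Ici (0:ℝ))).toReal) : ℝ) : ℂ) * p)
    (r : ℝ) (hr : 0 < r) :
    DifferentiableOn ℂ (fun p : ℂ => Complex.exp (-β p * r) / (Q p * κ p))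
        {p : ℂ | 0 < p.re} ∧
      ∀ ε > (0:ℝ), ∃ R₀ > (0:ℝ), ∀ p : ℂ, 0 ≤ p.re → R₀ ≤ ‖p‖ →
        ‖Complex.exp (-β p * r) / (Q p * κ p)‖ ≤ ε := by
  set ν := μ.restrict (Ici 0)
  have : IsFiniteMeasure ν := isFiniteMeasure_restrict.2 hfin
  have : NeZero ν := ⟨fun h => h0 <|
    measure_mono_null (singleton_subset_iff.2 self_mem_Ici) (Measure.restrict_eq_zero.1 h)⟩
  have hν : ∀ᵐ x : ℝ ∂ν, 0 ≤ x := ae_restrict_mem measurableSet_Ici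
  obtain rfl : Q = complexModulus ν := funext hQ
  obtain rfl : κ = waveNumber ν ρ := funext hκ
  obtain rfl : β = fun p => waveNumber ν ρ p - (Real.sqrt (ρ / ν.real univ) : ℂ) * p := by
    funext p
    rw [hβ, measureReal_restrict_apply_univ, measureReal_def]
  refine ⟨?_, fun ε hε => ?_⟩
  · have hκd := differentiableOn_waveNumber hν ρ
    refine DifferentiableOn.div (by fun_prop)
      ((differentiableOn_complexModulus hν).mul hκd) fun p hp => ?_
    have hp0 : p ≠ 0 := fun h => by simp [h] at hp
    rw [complexModulus_mul_waveNumber]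
    exact mul_ne_zero (mul_ne_zero (Complex.ofReal_ne_zero.2 (Real.sqrt_pos.2 hρ).ne') hp0)
      (Complex.cpow_one_half_ne_zero (complexModulus_ne_zero hν hp.out.le hp0))
  · obtain ⟨C, hC, R, hR, hgrowth⟩ :=
      exists_mul_norm_le_norm_complexModulus_mul_waveNumber hν hρ
    refine ⟨max R (C * ε)⁻¹, lt_max_of_lt_left hR, fun p hp hpR => ?_⟩
    have hpC : ε⁻¹ ≤ C * ‖p‖ := calc
      ε⁻¹ = C * (C * ε)⁻¹ := by field_simp
      _ ≤ C * ‖p‖ := by gcongr; exact le_of_max_le_right hpR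
    calc _ ≤ ‖complexModulus ν p * waveNumber ν ρ p‖⁻¹ :=
          Complex.norm_exp_neg_mul_div_le_inv_norm (re_waveNumber_sub_nonneg hν ρ hp) hr.le
      _ ≤ ε := inv_le_of_inv_le₀ hε (hpC.trans (hgrowth p hp (le_of_max_le_left hpR)))

/-- Let `ρ > 0` and let `μ` be a nonzero positive Radon measure on `[0,∞)`
with `∫ (1+r)⁻¹ μ(dr) < ∞`, `μ({0}) > 0` and `G₀ := μ([0,∞)) < ∞`.  With
`Q(p) = p ∫ (p+r)⁻¹ μ(dr)`, `κ(p) = √ρ p / Q(p)^{1/2}` (principal branch) and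
`β(p) = κ(p) − (ρ/G₀)^{1/2} p`, for every fixed `r > 0` the function
`f(p) = e^{−β(p) r} / (Q(p) κ(p))` is holomorphic in the open right half-plane and tends to
`0` as `|p| → ∞` there, uniformly in `arg p`. -/
theorem stmt12 (ρ : ℝ) (hρ : 0 < ρ) (μ : Measure ℝ)
    (hμ : (∫⁻ r in Ici (0:ℝ), ENNReal.ofReal ((1 + r)⁻¹) ∂μ) < ⊤)
    (h0 : μ {(0:ℝ)} ≠ 0) (hfin : μ (Ici (0:ℝ)) ≠ ⊤)
    (Q κ β : ℂ → ℂ)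
    (hQ : ∀ p : ℂ, Q p = p * ∫ r in Ici (0:ℝ), (p + (r : ℂ))⁻¹ ∂μ)
    (hκ : ∀ p : ℂ, κ p = (Real.sqrt ρ : ℂ) * p / (Q p) ^ ((1:ℂ) / 2))
    (hβ : ∀ p : ℂ, β p = κ p - ((Real.sqrt (ρ / (μ (Ici (0:ℝ))).toReal) : ℝ) : ℂ) * p)
    (r : ℝ) (hr : 0 < r) :
    DifferentiableOn ℂ (fun p : ℂ => Complex.exp (-β p * r) / (Q p * κ p))
        {p : ℂ | 0 < p.re} ∧
      ∀ ε > (0:ℝ), ∃ R₀ > (0:ℝ), ∀ p : ℂ, 0 ≤ p.re → R₀ ≤ ‖p‖ →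
        ‖Complex.exp (-β p * r) / (Q p * κ p)‖ ≤ ε :=
  stmt12_general ρ hρ μ h0 hfin Q κ β hQ hκ hβ r hr
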